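/- For any real β, ω, Hermitian H, and matrix A, the operator Fourier transform satisfies ‖Â_H(ω)‖ ≤ (σ√(2π))^{-1/2} e^{-βω + σ²β²} · ‖e^{βH} A e^{-βH}‖. -/

import Mathlib

/-!
In an eigenbasis of `H`, the `(p, q)` entry of `Â_H(ω)` is `A_pq` times the Fourier transform
`f̂(ξ) ∝ e^{-ξ²/(4σ²)}` of the Gaussian weight at `ξ = ω - (λ_p - λ_q)`, while conjugation by
`e^{βH}` multiplies `A_pq` by `e^{β(λ_p - λ_q)}`. Completing the square gives
`f̂(ξ) = e^{-βξ + σ²β²} f̂(ξ - 2σ²β)`, hence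
`Â_H(ω) = e^{-βω + σ²β²} (e^{βH} A e^{-βH})^_H(ω - 2σ²β)`. Since `e^{iHt}` is unitary,
`‖B̂_H(ω')‖ ≤ (2π)^{-1/2} (∫ f) ‖B‖ = (σ√(2π))^{-1/2} ‖B‖` for every `B`; take
`B = e^{βH} A e^{-βH}`.
-/

open scoped Matrix.Norms.L2Operator

open Matrix Complex Real MeasureTheory

/-- The Gaussian weight `f(t) = e^{-σ²t²} √(σ√(2/π))`. -/
noncomputable def gaussWeight (σ t : ℝ) : ℝ :=
  Real.exp (-(σ ^ 2 * t ^ 2)) * Real.sqrt (σ * Real.sqrt (2 / π))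

/-- The operator Fourier transform
`Â_H(ω) = (2π)^{-1/2} ∫ e^{iHt} A e^{-iHt} e^{-iωt} f(t) dt` with Gaussian width `σ`. -/
noncomputable def oftInt {m : ℕ} (H A : Matrix (Fin m) (Fin m) ℂ) (σ ω : ℝ) :
    Matrix (Fin m) (Fin m) ℂ :=
  ((Real.sqrt (2 * π) : ℂ))⁻¹ •
    ∫ t : ℝ, (Complex.exp (-(I * ω * t)) * (gaussWeight σ t : ℂ)) •
      (NormedSpace.exp ((I * t) • H) * A * NormedSpace.exp ((-(I * t)) • H))

namespace Matrix

variable {n : Type*} [Fintype n] [DecidableEq n]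

lemma mul_integral_mul_apply {X : Type*} [MeasurableSpace X] {μ : Measure X}
    {φ : X → Matrix n n ℂ} (hφ : Integrable φ μ) (V U : Matrix n n ℂ) (p q : n) :
    (V * (∫ x, φ x ∂μ) * U) p q = ∫ x, (V * φ x * U) p q ∂μ :=
  let L : Matrix n n ℂ →L[ℂ] ℂ := LinearMap.toContinuousLinearMap
    (entryLinearMap ℂ ℂ p q ∘ₗ LinearMap.mulRight ℂ U ∘ₗ LinearMap.mulLeft ℂ V)
  (L.integral_comp_comm hφ).symm

namespace IsHermitian

variable {H : Matrix n n ℂ}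

lemma exp_smul_mem_unitary (hH : H.IsHermitian) {c : ℂ} (hc : c ∈ skewAdjoint ℂ) :
    NormedSpace.exp (c • H) ∈ unitary (Matrix n n ℂ) :=
  let +nondep : NormedAlgebra ℚ (Matrix n n ℂ) := .restrictScalars ℚ ℂ _
  NormedSpace.exp_mem_unitary_of_mem_skewAdjoint (hH.isSelfAdjoint.smul_mem_skewAdjoint hc)

lemma norm_exp_smul_mul_mul_exp_neg_smul (hH : H.IsHermitian) {c : ℂ} (hc : c ∈ skewAdjoint ℂ)
    (X : Matrix n n ℂ) :
    ‖NormedSpace.exp (c • H) * X * NormedSpace.exp ((-c) • H)‖ = ‖X‖ := by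
  rw [CStarRing.norm_mul_mem_unitary _ (hH.exp_smul_mem_unitary (neg_mem hc)),
    CStarRing.norm_mem_unitary_mul _ (hH.exp_smul_mem_unitary hc)]

variable (hH : H.IsHermitian)

local notation "U" => (hH.eigenvectorUnitary : Matrix n n ℂ)

lemma star_mul_exp_smul_mul (c : ℂ) :
    star U * NormedSpace.exp (c • H) * U = diagonal fun i => cexp (c * hH.eigenvalues i) := by
  have hU : IsUnit U := (Unitary.toUnits hH.eigenvectorUnitary).isUnit
  have hinv : U⁻¹ = star U := inv_eq_left_inv (Unitary.coe_star_mul_self _)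
  rw [← hinv, ← exp_conj' _ _ hU, hinv, mul_smul_comm, smul_mul_assoc]
  have hdiag := hH.conjStarAlgAut_star_eigenvectorUnitary
  rw [Unitary.conjStarAlgAut_star_apply] at hdiag
  rw [hdiag, ← diagonal_smul, exp_diagonal]
  congr 1
  ext i
  simp [← Complex.exp_eq_exp_ℂ]

lemma star_mul_exp_conj_mul_apply (c : ℂ) (X : Matrix n n ℂ) (p q : n) :
    (star U * (NormedSpace.exp (c • H) * X * NormedSpace.exp ((-c) • H)) * U) p q =
      cexp (c * (hH.eigenvalues p - hH.eigenvalues q)) * (star U * X * U) p q := by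
  have hU : U * star U = 1 := Unitary.coe_mul_star_self _
  have hconj : star U * (NormedSpace.exp (c • H) * X * NormedSpace.exp ((-c) • H)) * U =
      (star U * NormedSpace.exp (c • H) * U) * (star U * X * U) *
        (star U * NormedSpace.exp ((-c) • H) * U) := by
    simp only [Matrix.mul_assoc, ← Matrix.mul_assoc U, hU, Matrix.one_mul]
  rw [hconj, star_mul_exp_smul_mul, star_mul_exp_smul_mul, mul_diagonal, diagonal_mul,
    mul_sub, sub_eq_add_neg, Complex.exp_add, neg_mul]
  ring

end IsHermitian
end Matrix

lemma gaussWeight_nonneg (σ t : ℝ) : 0 ≤ gaussWeight σ t := by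
  unfold gaussWeight
  positivity

lemma gaussWeight_eq_mul_exp (σ t : ℝ) :
    gaussWeight σ t = √(σ * √(2 / π)) * rexp (-σ ^ 2 * t ^ 2) := by
  rw [gaussWeight, mul_comm, neg_mul]

lemma integrable_gaussWeight (σ : ℝ) : Integrable (gaussWeight σ) := by
  simp_rw [funext (gaussWeight_eq_mul_exp σ)]
  rcases eq_or_ne σ 0 with rfl | hσ
  · simp
  exact (integrable_exp_neg_mul_sq (by positivity)).const_mul _

lemma integral_gaussWeight {σ : ℝ} (hσ : 0 < σ) :
    ∫ t, gaussWeight σ t = √(2 * π) / √(σ * √(2 * π)) := by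
  simp_rw [gaussWeight_eq_mul_exp, integral_const_mul, integral_gaussian]
  rw [eq_div_iff (by positivity), ← Real.sqrt_mul (by positivity), ← Real.sqrt_mul (by positivity)]
  congr 1
  have h2π : √(2 / π) * √(2 * π) = 2 := by
    rw [← Real.sqrt_mul (by positivity), show 2 / π * (2 * π) = 2 ^ 2 by field_simp,
      Real.sqrt_sq zero_le_two]
  calc σ * √(2 / π) * (π / σ ^ 2) * (σ * √(2 * π))
      = (√(2 / π) * √(2 * π)) * π := by field_simp
    _ = 2 * π := by rw [h2π]

lemma norm_cexp_mul_gaussWeight (σ ω t : ℝ) :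
    ‖cexp (-(I * ω * t)) * (gaussWeight σ t : ℂ)‖ = gaussWeight σ t := by
  rw [norm_mul, Complex.norm_real, Real.norm_of_nonneg (gaussWeight_nonneg σ t),
    show -(I * ω * t) = ((-(ω * t) : ℝ) : ℂ) * I by push_cast; ring,
    Complex.norm_exp_ofReal_mul_I, one_mul]

noncomputable def gaussWeightFT (σ ξ : ℝ) : ℂ :=
  ∫ t : ℝ, cexp (-(I * ξ * t)) * gaussWeight σ t

lemma gaussWeightFT_eq {σ : ℝ} (hσ : σ ≠ 0) (ξ : ℝ) :
    gaussWeightFT σ ξ =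
      √(σ * √(2 / π)) * ((π / σ ^ 2 : ℂ) ^ (1 / 2 : ℂ) * cexp (-ξ ^ 2 / (4 * σ ^ 2))) := by
  have hb : 0 < ((σ : ℂ) ^ 2).re := by norm_cast; positivity
  have hfourier := fourierIntegral_gaussian hb (-ξ)
  simp only [gaussWeightFT, gaussWeight_eq_mul_exp, neg_sq] at hfourier ⊢
  rw [← hfourier, ← integral_const_mul]
  congr 1
  ext t
  push_cast
  ring_nf

lemma gaussWeightFT_eq_exp_mul_gaussWeightFT_sub {σ : ℝ} (hσ : σ ≠ 0) (β ξ : ℝ) :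
    gaussWeightFT σ ξ =
      cexp (-(β * ξ) + σ ^ 2 * β ^ 2) * gaussWeightFT σ (ξ - 2 * σ ^ 2 * β) := by
  have hexp : cexp (-ξ ^ 2 / (4 * σ ^ 2)) = cexp (-(β * ξ) + σ ^ 2 * β ^ 2) *
      cexp (-((ξ - 2 * σ ^ 2 * β : ℝ) : ℂ) ^ 2 / (4 * σ ^ 2)) := by
    have hσ' : (σ : ℂ) ≠ 0 := ofReal_ne_zero.mpr hσ
    rw [← Complex.exp_add]
    congr 1
    push_cast
    field_simp
    ring
  rw [gaussWeightFT_eq hσ, gaussWeightFT_eq hσ, hexp]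
  ring

lemma continuous_exp_mul_ofReal_smul {𝔸 : Type*} [NormedRing 𝔸] [NormedAlgebra ℂ 𝔸]
    [CompleteSpace 𝔸] (x : 𝔸) (c : ℂ) :
    Continuous fun t : ℝ => NormedSpace.exp ((c * t) • x) :=
  (differentiable_exp_smul_const ℂ x).continuous.comp (by fun_prop)

lemma integrable_oftInt_integrand {n : Type*} [Fintype n] [DecidableEq n] {H : Matrix n n ℂ}
    (hH : H.IsHermitian) (A : Matrix n n ℂ) (σ ω : ℝ) :
    Integrable fun t : ℝ => (cexp (-(I * ω * t)) * (gaussWeight σ t : ℂ)) •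
      (NormedSpace.exp ((I * t) • H) * A * NormedSpace.exp ((-(I * t)) • H)) := by
  refine ((integrable_gaussWeight σ).mul_const ‖A‖).mono' ?_ (.of_forall fun t => ?_)
  · have hexp := continuous_exp_mul_ofReal_smul H I
    have hexp_neg := continuous_exp_mul_ofReal_smul H (-I)
    simp only [neg_mul] at hexp_neg
    refine Continuous.aestronglyMeasurable ?_
    unfold gaussWeight
    fun_prop
  · rw [norm_smul, norm_cexp_mul_gaussWeight,
      hH.norm_exp_smul_mul_mul_exp_neg_smul (by simp [skewAdjoint.mem_iff])]

section
variable {m : ℕ} {H : Matrix (Fin m) (Fin m) ℂ}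

section
variable (hH : H.IsHermitian)

local notation "U" => (hH.eigenvectorUnitary : Matrix (Fin m) (Fin m) ℂ)

lemma star_mul_oftInt_mul_apply (A : Matrix (Fin m) (Fin m) ℂ) (σ ω : ℝ) (p q : Fin m) :
    (star U * oftInt H A σ ω * U) p q =
      (√(2 * π) : ℂ)⁻¹ * gaussWeightFT σ (ω - (hH.eigenvalues p - hH.eigenvalues q)) *
        (star U * A * U) p q := by
  rw [oftInt, Matrix.mul_smul, Matrix.smul_mul, Matrix.smul_apply, smul_eq_mul,
    mul_assoc ((√(2 * π) : ℂ)⁻¹), mul_integral_mul_apply (integrable_oftInt_integrand hH A σ ω),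
    gaussWeightFT, ← integral_mul_const]
  congr 2
  ext t
  rw [Matrix.mul_smul, Matrix.smul_mul, Matrix.smul_apply, smul_eq_mul,
    hH.star_mul_exp_conj_mul_apply]
  rw [show -(I * ((ω - (hH.eigenvalues p - hH.eigenvalues q) : ℝ) : ℂ) * t) =
      -(I * ω * t) + I * t * (hH.eigenvalues p - hH.eigenvalues q) by push_cast; ring,
    Complex.exp_add]
  ring

end

lemma oftInt_eq_smul_oftInt_conj (hH : H.IsHermitian) {σ : ℝ} (hσ : σ ≠ 0)
    (A : Matrix (Fin m) (Fin m) ℂ) (β ω : ℝ) :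
    oftInt H A σ ω = (rexp (-(β * ω) + σ ^ 2 * β ^ 2) : ℂ) •
      oftInt H (NormedSpace.exp ((β : ℂ) • H) * A * NormedSpace.exp ((-(β : ℂ)) • H)) σ
        (ω - 2 * σ ^ 2 * β) := by
  rw [← (EquivLike.injective (Unitary.conjStarAlgAut ℂ _ (star hH.eigenvectorUnitary))).eq_iff,
    Unitary.conjStarAlgAut_star_apply, Unitary.conjStarAlgAut_star_apply]
  ext p q
  rw [Matrix.mul_smul, Matrix.smul_mul, Matrix.smul_apply, smul_eq_mul,
    star_mul_oftInt_mul_apply, star_mul_oftInt_mul_apply, hH.star_mul_exp_conj_mul_apply,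
    gaussWeightFT_eq_exp_mul_gaussWeightFT_sub hσ β, sub_right_comm ω, ofReal_exp,
    show -(β * ((ω - (hH.eigenvalues p - hH.eigenvalues q) : ℝ) : ℂ)) + σ ^ 2 * β ^ 2 =
      ((-(β * ω) + σ ^ 2 * β ^ 2 : ℝ) : ℂ) + β * (hH.eigenvalues p - hH.eigenvalues q) by
        push_cast; ring,
    Complex.exp_add]
  ring

lemma norm_oftInt_le (hH : H.IsHermitian) {σ : ℝ} (hσ : 0 < σ) (A : Matrix (Fin m) (Fin m) ℂ)
    (ω : ℝ) :
    ‖oftInt H A σ ω‖ ≤ (√(σ * √(2 * π)))⁻¹ * ‖A‖ := by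
  have hbound : ‖∫ t : ℝ, (cexp (-(I * ω * t)) * (gaussWeight σ t : ℂ)) •
      (NormedSpace.exp ((I * t) • H) * A * NormedSpace.exp ((-(I * t)) • H))‖ ≤
        ∫ t, gaussWeight σ t * ‖A‖ := by
    refine norm_integral_le_of_norm_le ((integrable_gaussWeight σ).mul_const _)
      (.of_forall fun t => ?_)
    rw [norm_smul, norm_cexp_mul_gaussWeight,
      hH.norm_exp_smul_mul_mul_exp_neg_smul (by simp [skewAdjoint.mem_iff])]
  rw [integral_mul_const, integral_gaussWeight hσ] at hbound
  rw [oftInt, norm_smul, norm_inv, Complex.norm_real, Real.norm_of_nonneg (Real.sqrt_nonneg _)]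
  calc (√(2 * π))⁻¹ * ‖_‖ ≤ (√(2 * π))⁻¹ * (√(2 * π) / √(σ * √(2 * π)) * ‖A‖) := by gcongr
    _ = (√(σ * √(2 * π)))⁻¹ * ‖A‖ := by field_simp

end

/-- **Norm decay of the operator Fourier transform at large energy difference:**
`‖Â_H(ω)‖ ≤ (σ√(2π))^{-1/2} e^{-βω + σ²β²} ‖e^{βH} A e^{-βH}‖` for any real `β, ω`,
Hermitian `H`, and matrix `A`. -/
theorem norm_oft_le {m : ℕ} (H A : Matrix (Fin m) (Fin m) ℂ)
    (hH : H.IsHermitian) (σ : ℝ) (hσ : 0 < σ) (β ω : ℝ) :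
    ‖oftInt H A σ ω‖ ≤
      (Real.sqrt (σ * Real.sqrt (2 * π)))⁻¹ * Real.exp (-(β * ω) + σ ^ 2 * β ^ 2) *
        ‖NormedSpace.exp ((β : ℂ) • H) * A * NormedSpace.exp ((-(β : ℂ)) • H)‖ := by
  rw [oftInt_eq_smul_oftInt_conj hH hσ.ne' A β ω, norm_smul, Complex.norm_real,
    Real.norm_of_nonneg (Real.exp_pos _).le, mul_comm _ (rexp _), mul_assoc (rexp _)]
  exact mul_le_mul_of_nonneg_left (norm_oftInt_le hH hσ _ _) (Real.exp_pos _).le
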